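/- For every c ∈ (0,1) and P ∈ 𝒫₆ (rotations preserving the cube [-1,1]³), the tetrahedral rotation group 𝒫₄ is contained in the symmetry group of the attractor: Q·A(c,P) = A(c,P) for all Q ∈ 𝒫₄. -/

import Mathlib

/-!
Write `V` for the vertex set of `T₀`. A rotation in `𝒫₄` preserves `T₀` and the sphere through
`V`, so by strict convexity of the Euclidean norm it permutes the extreme points `V`, hence also
`-V`. A rotation `P ∈ 𝒫₆` maps `V` into the cube vertices `V ∪ -V`; distinct points of `V` have
inner product `-1`, while no point of `V` has inner product `-1` with a point of `-V`, so
`P V = V` or `P V = -V`. Hence every `Q ∈ 𝒫₄` fixes each set `Pᵏ V`.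

Unfolding the self-similarity `n` times writes `a ∈ A` as `∑_{k<n} cᵏ Pᵏ v_{i_k} + cⁿ Pⁿ b` with
`b ∈ A`. Applying `Q` only permutes the vertices `Pᵏ v_{i_k}` within `Pᵏ V`, so `Q a` lies within
`2 cⁿ sup_A ‖·‖` of a point of `A`; as `A` is closed, `Q a ∈ A`.
-/

noncomputable section
open Matrix

abbrev E3 := EuclideanSpace ℝ (Fin 3)

def vtx : Fin 4 → E3 :=
  ![!₂[1, -1, 1], !₂[-1, 1, 1], !₂[-1, -1, -1], !₂[1, 1, -1]]

/-- The other four vertices of the cube `[-1,1]³`. -/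
def vtx' : Fin 4 → E3 :=
  ![!₂[1, 1, 1], !₂[-1, -1, 1], !₂[1, -1, -1], !₂[-1, 1, -1]]

/-- The cube `C₀ = [-1,1]³`. -/
def C0 : Set E3 := {x | ∀ i, x i ∈ Set.Icc (-1 : ℝ) 1}

/-- The regular tetrahedron `T₀` with vertices `v₁, v₂, v₃, v₄`. -/
def T0 : Set E3 := convexHull ℝ (Set.range vtx)

/-- Membership in the hexahedral group `𝒫₆`: rotations preserving the cube `C₀`. -/
def memP6 (Q : Matrix (Fin 3) (Fin 3) ℝ) : Prop :=
  Q ∈ Matrix.specialOrthogonalGroup (Fin 3) ℝ ∧ Matrix.toEuclideanLin Q '' C0 = C0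

/-- Membership in the tetrahedral group `𝒫₄`: rotations preserving the tetrahedron `T₀`. -/
def memP4 (Q : Matrix (Fin 3) (Fin 3) ℝ) : Prop :=
  Q ∈ Matrix.specialOrthogonalGroup (Fin 3) ℝ ∧ Matrix.toEuclideanLin Q '' T0 = T0

def fmap (c : ℝ) (P : Matrix (Fin 3) (Fin 3) ℝ) (i : Fin 4) (x : E3) : E3 :=
  c • Matrix.toEuclideanLin P x + vtx i

def IsAttractor (c : ℝ) (P : Matrix (Fin 3) (Fin 3) ℝ) (A : Set E3) : Prop :=
  A.Nonempty ∧ IsCompact A ∧ A = ⋃ i : Fin 4, fmap c P i '' A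

open scoped RealInnerProductSpace
open Set Filter Topology

def Matrix.toEuclideanLinearIsometryEquiv {n 𝕜 : Type*} [RCLike 𝕜] [Fintype n] [DecidableEq n]
    {U : Matrix n n 𝕜} (hU : U ∈ unitaryGroup n 𝕜) :
    EuclideanSpace 𝕜 n ≃ₗᵢ[𝕜] EuclideanSpace 𝕜 n :=
  Unitary.linearIsometryEquiv ⟨toEuclideanCLM (n := n) (𝕜 := 𝕜) U, Unitary.map_mem _ hU⟩

theorem Matrix.coe_toEuclideanLinearIsometryEquiv {n 𝕜 : Type*} [RCLike 𝕜] [Fintype n]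
    [DecidableEq n] {U : Matrix n n 𝕜} (hU : U ∈ unitaryGroup n 𝕜) :
    ⇑(toEuclideanLinearIsometryEquiv hU) = toEuclideanLin U :=
  rfl

section Attractor

variable {E ι : Type*} [NormedAddCommGroup E] [NormedSpace ℝ E]
  {c : ℝ} {L R : E ≃ₗᵢ[ℝ] E} {v : ι → E} {A : Set E}

theorem exists_mem_norm_apply_pow_sub_le (hc : 0 ≤ c)
    (hA : A = ⋃ i, (fun x => c • L x + v i) '' A)
    (hR : ∀ k : ℕ, MapsTo R ((L ^ k) '' range v) ((L ^ k) '' range v))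
    {M : ℝ} (hM : ∀ a ∈ A, ‖a‖ ≤ M) (n k : ℕ) {a : E} (ha : a ∈ A) :
    ∃ a' ∈ A, ‖R ((L ^ k) a) - (L ^ k) a'‖ ≤ c ^ n * (2 * M) := by
  induction n generalizing k a with
  | zero =>
    refine ⟨a, ha, ?_⟩
    calc ‖R ((L ^ k) a) - (L ^ k) a‖ ≤ ‖R ((L ^ k) a)‖ + ‖(L ^ k) a‖ := norm_sub_le _ _
      _ ≤ c ^ 0 * (2 * M) := by
        simp only [LinearIsometryEquiv.norm_map, pow_zero]; linarith [hM a ha]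
  | succ n ih =>
    rw [hA] at ha
    obtain ⟨i, x, hx, rfl⟩ : ∃ i, ∃ x ∈ A, c • L x + v i = a := by
      simpa only [mem_iUnion, mem_image] using ha
    obtain ⟨x', hx', hxx'⟩ := ih (k + 1) hx
    obtain ⟨_, ⟨j, rfl⟩, hj⟩ := hR k ⟨v i, mem_range_self i, rfl⟩
    refine ⟨c • L x' + v j, ?_, ?_⟩
    · rw [hA]
      exact mem_iUnion.2 ⟨j, x', hx', rfl⟩
    have hsub : R ((L ^ k) (c • L x + v i)) - (L ^ k) (c • L x' + v j)
        = c • (R ((L ^ (k + 1)) x) - (L ^ (k + 1)) x') := by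
      simp only [map_add, map_smul, pow_succ, LinearIsometryEquiv.coe_mul, Function.comp_apply,
        hj, smul_sub]
      abel
    rw [hsub, norm_smul, Real.norm_of_nonneg hc, pow_succ c n, mul_comm (c ^ n), mul_assoc]
    exact mul_le_mul_of_nonneg_left hxx' hc

theorem mapsTo_of_forall_mapsTo_pow_image_range (hc₀ : 0 ≤ c) (hc₁ : c < 1)
    (hAc : IsCompact A) (hA : A = ⋃ i, (fun x => c • L x + v i) '' A)
    (hR : ∀ k : ℕ, MapsTo R ((L ^ k) '' range v) ((L ^ k) '' range v)) :
    MapsTo R A A := by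
  obtain ⟨M, hM⟩ := isBounded_iff_forall_norm_le.1 hAc.isBounded
  intro a ha
  rw [← hAc.isClosed.closure_eq, Metric.mem_closure_iff]
  intro ε hε
  have hlim : Tendsto (fun n : ℕ => c ^ n * (2 * M)) atTop (𝓝 0) := by
    simpa using (tendsto_pow_atTop_nhds_zero_of_lt_one hc₀ hc₁).mul_const (2 * M)
  obtain ⟨n, hn⟩ := (hlim.eventually (gt_mem_nhds hε)).exists
  obtain ⟨a', ha', hle⟩ := exists_mem_norm_apply_pow_sub_le hc₀ hA hR hM n 0 ha
  refine ⟨a', ha', ?_⟩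
  rw [dist_eq_norm]
  simpa using hle.trans_lt hn

theorem image_eq_of_forall_image_pow_image_range_eq (hc₀ : 0 ≤ c) (hc₁ : c < 1)
    (hAc : IsCompact A) (hA : A = ⋃ i, (fun x => c • L x + v i) '' A)
    (hR : ∀ k : ℕ, R '' ((L ^ k) '' range v) = (L ^ k) '' range v) :
    R '' A = A := by
  have hRA := mapsTo_of_forall_mapsTo_pow_image_range hc₀ hc₁ hAc hA fun k =>
    mapsTo_iff_image_subset.2 (hR k).subset
  have hRA' : MapsTo R.symm A A :=
    mapsTo_of_forall_mapsTo_pow_image_range hc₀ hc₁ hAc hA fun k x hx => by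
      rw [← hR k] at hx
      obtain ⟨y, hy, rfl⟩ := hx
      simpa using hy
  exact hRA.image_subset.antisymm fun a ha => ⟨R.symm a, hRA' ha, R.apply_symm_apply a⟩

end Attractor

section Vertices

variable {E : Type*} [NormedAddCommGroup E]

theorem mem_of_mem_convexHull_of_norm_eq [NormedSpace ℝ E] [StrictConvexSpace ℝ E]
    {S : Set E} {r : ℝ} (hr : r ≠ 0) (hS : S ⊆ Metric.sphere 0 r) {x : E}
    (hx : x ∈ convexHull ℝ S) (hxr : ‖x‖ = r) : x ∈ S := by
  have hball : convexHull ℝ S ⊆ Metric.closedBall 0 r :=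
    convexHull_min (hS.trans Metric.sphere_subset_closedBall) (convex_closedBall 0 r)
  have hext : x ∈ extremePoints ℝ (Metric.closedBall 0 r) :=
    StrictConvexSpace.sphere_subset_extremePoints_closedBall 0 hr (mem_sphere_zero_iff_norm.2 hxr)
  exact extremePoints_convexHull_subset
    (inter_extremePoints_subset_extremePoints_of_subset hball ⟨hx, hext⟩)

theorem image_eq_of_image_convexHull_eq [NormedSpace ℝ E] [StrictConvexSpace ℝ E]
    {S : Set E} (hSfin : S.Finite) {r : ℝ} (hr : r ≠ 0) (hS : S ⊆ Metric.sphere 0 r)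
    (R : E ≃ₗᵢ[ℝ] E) (hR : R '' convexHull ℝ S = convexHull ℝ S) : R '' S = S := by
  have hmaps : MapsTo R S S := fun x hx =>
    mem_of_mem_convexHull_of_norm_eq hr hS (hR ▸ mem_image_of_mem R (subset_convexHull ℝ S hx))
      (by rw [R.norm_map, ← mem_sphere_zero_iff_norm]; exact hS hx)
  exact ((hSfin.injOn_iff_bijOn_of_mapsTo hmaps).1 R.injective.injOn).image_eq

theorem image_eq_or_image_eq_neg [InnerProductSpace ℝ E] {S : Set E} (hSfin : S.Finite)
    (hpair : S.Pairwise fun x y => ⟪x, y⟫ = -1) (hne : ∀ x ∈ S, ∀ y ∈ S, ⟪x, y⟫ ≠ 1)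
    (R : E ≃ₗᵢ[ℝ] E) (hR : R '' S ⊆ S ∪ -S) : R '' S = S ∨ R '' S = -S := by
  have hsub : R '' S ⊆ S ∨ R '' S ⊆ -S := by
    by_contra! h
    obtain ⟨⟨_, ⟨x, hx, rfl⟩, hxS⟩, ⟨_, ⟨y, hy, rfl⟩, hyS⟩⟩ := And.intro
      (not_subset.1 h.1) (not_subset.1 h.2)
    have hx' : R x ∈ -S := (hR ⟨x, hx, rfl⟩).resolve_left hxS
    have hy' : R y ∈ S := (hR ⟨y, hy, rfl⟩).resolve_right hyS
    have hxy : y ≠ x := by rintro rfl; exact hxS hy'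
    refine hne _ hy' _ hx' ?_
    rw [inner_neg_right, LinearIsometryEquiv.inner_map_map, hpair hy hx hxy, neg_neg]
  rcases hsub with h | h
  · exact .inl (eq_of_subset_of_ncard_le h (ncard_image_of_injective S R.injective).ge hSfin)
  · refine .inr (eq_of_subset_of_ncard_le h ?_ hSfin.neg)
    rw [ncard_neg, ncard_image_of_injective S R.injective]

theorem image_pow_eq_or_eq_neg [NormedSpace ℝ E] {S : Set E} {L : E ≃ₗᵢ[ℝ] E}
    (hL : L '' S = S ∨ L '' S = -S) (k : ℕ) : (L ^ k) '' S = S ∨ (L ^ k) '' S = -S := by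
  induction k with
  | zero => simp
  | succ k ih =>
    rw [pow_succ', LinearIsometryEquiv.coe_mul, image_comp]
    rcases ih with h | h <;> rw [h]
    · exact hL
    · rw [image_neg, neg_inj, neg_eq_iff_eq_neg]
      exact hL.symm

end Vertices

theorem inner_vtx (i j : Fin 4) : ⟪vtx i, vtx j⟫ = if i = j then 3 else -1 := by
  fin_cases i <;> fin_cases j <;>
    simp [vtx, PiLp.inner_apply, Fin.sum_univ_three, EuclideanSpace.norm_sq_eq] <;> norm_num

theorem norm_vtx (i : Fin 4) : ‖vtx i‖ = √3 := by
  rw [norm_eq_sqrt_real_inner, inner_vtx, if_pos rfl]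

theorem vtx_mem_C0 (i : Fin 4) : vtx i ∈ C0 := by
  intro j
  fin_cases i <;> fin_cases j <;> simp [vtx]

theorem mem_range_vtx_union_neg_of_mem_C0 {x : E3} (hx : x ∈ C0) (hnorm : ‖x‖ = √3) :
    x ∈ range vtx ∪ -range vtx := by
  have hsq : x 0 ^ 2 + x 1 ^ 2 + x 2 ^ 2 = 3 := by
    have := EuclideanSpace.norm_sq_eq x
    simp only [hnorm, Real.sq_sqrt (by norm_num : (0:ℝ) ≤ 3), Real.norm_eq_abs, sq_abs,
      Fin.sum_univ_three] at this
    linarith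
  have hle : ∀ i, x i ^ 2 ≤ 1 := fun i => by
    obtain ⟨h₁, h₂⟩ := hx i
    nlinarith
  have hsq0 : x 0 ^ 2 = 1 := by linarith [hle 0, hle 1, hle 2]
  have hsq1 : x 1 ^ 2 = 1 := by linarith [hle 0, hle 1, hle 2]
  have hsq2 : x 2 ^ 2 = 1 := by linarith [hle 0, hle 1, hle 2]
  have hx3 : x = !₂[x 0, x 1, x 2] := by
    ext i
    fin_cases i <;> rfl
  rw [hx3]
  rcases sq_eq_one_iff.1 hsq0 with h0 | h0 <;> rcases sq_eq_one_iff.1 hsq1 with h1 | h1 <;>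
    rcases sq_eq_one_iff.1 hsq2 with h2 | h2 <;> rw [h0, h1, h2] <;>
    simp [vtx, ← WithLp.toLp_neg, Matrix.neg_cons]

theorem image_range_vtx_eq_of_image_T0_eq (R : E3 ≃ₗᵢ[ℝ] E3) (hR : R '' T0 = T0) :
    R '' range vtx = range vtx :=
  image_eq_of_image_convexHull_eq (finite_range _) (by positivity)
    (range_subset_iff.2 fun i => mem_sphere_zero_iff_norm.2 (norm_vtx i)) R hR

theorem image_range_vtx_eq_or_eq_neg_of_image_C0_eq (L : E3 ≃ₗᵢ[ℝ] E3) (hL : L '' C0 = C0) :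
    L '' range vtx = range vtx ∨ L '' range vtx = -range vtx := by
  refine image_eq_or_image_eq_neg (finite_range _) ?_ ?_ L ?_
  · rintro _ ⟨i, rfl⟩ _ ⟨j, rfl⟩ hij
    rw [inner_vtx, if_neg (ne_of_apply_ne _ hij)]
  · rintro _ ⟨i, rfl⟩ _ ⟨j, rfl⟩
    rw [inner_vtx]
    split_ifs <;> norm_num
  · rintro _ ⟨_, ⟨i, rfl⟩, rfl⟩
    exact mem_range_vtx_union_neg_of_mem_C0 (hL ▸ mem_image_of_mem L (vtx_mem_C0 i))
      (by rw [L.norm_map, norm_vtx])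

theorem P4_subset_sym (c : ℝ) (hc : c ∈ Set.Ioo (0 : ℝ) 1)
    (P : Matrix (Fin 3) (Fin 3) ℝ) (hP : memP6 P)
    (A : Set E3) (hA : IsAttractor c P A)
    (Q : Matrix (Fin 3) (Fin 3) ℝ) (hQ : memP4 Q) :
    Matrix.toEuclideanLin Q '' A = A := by
  set L := toEuclideanLinearIsometryEquiv (specialUnitaryGroup_le_unitaryGroup hP.1)
  set R := toEuclideanLinearIsometryEquiv (specialUnitaryGroup_le_unitaryGroup hQ.1)
  have hRV : R '' range vtx = range vtx := image_range_vtx_eq_of_image_T0_eq R hQ.2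
  have hLV :=
    image_pow_eq_or_eq_neg (image_range_vtx_eq_or_eq_neg_of_image_C0_eq L hP.2)
  have hfix : A = ⋃ i, (fun x => c • L x + vtx i) '' A := by
    have hfmap : ∀ i, fmap c P i = fun x => c • L x + vtx i := fun i => rfl
    simpa only [hfmap] using hA.2.2
  rw [← coe_toEuclideanLinearIsometryEquiv (specialUnitaryGroup_le_unitaryGroup hQ.1)]
  refine image_eq_of_forall_image_pow_image_range_eq hc.1.le hc.2 hA.2.1 hfix fun k => ?_
  rcases hLV k with h | h <;> rw [h]
  · exact hRV
  · rw [image_neg, hRV]
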